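/- Let χ be a bicharacter on ℤ^I with values in 𝕜∖{0}, p ∈ I and i ∈ I∖{p}. Then in 𝒰(χ), for all m, n ∈ ℕ₀ with m ≥ n: E^+_{i,m}F^+_{i,n} − F^+_{i,n}E^+_{i,m} = (−1)^n q_{ip}^{n−m} q_{pp}^{n(n−m)} · (∏_{s=0}^{n−1}[m−s]_{q_pp}) · (∏_{s=0}^{m−1}(1 − q_pp^s q_{pi}q_{ip})) · (K_p^n K_i − δ_{m,n} L_p^n L_i) · E_p^{m−n}. -/

import Mathlib

/-- The quantum integer `[n]_q = 1 + q + ⋯ + q^{n-1}` for `n ∈ ℕ`. -/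
def qNat {𝕜 : Type*} [Field 𝕜] (q : 𝕜) (n : ℕ) : 𝕜 :=
  ∑ i ∈ Finset.range n, q ^ i

/-- The quantum factorial `[n]_q! = [1]_q [2]_q ⋯ [n]_q`. -/
def qFact {𝕜 : Type*} [Field 𝕜] (q : 𝕜) (n : ℕ) : 𝕜 :=
  ∏ i ∈ Finset.range n, qNat q (i + 1)

variable {𝕜 : Type*} [Field 𝕜] {I : Type*} [Fintype I] [DecidableEq I]

/-- The standard basis vector `ε_i` of `ℤ^I`. -/
def eps (i : I) : I → ℤ := Pi.single i 1

/-- `χ : ℤ^I × ℤ^I → 𝕜∖{0}` is a bicharacter. -/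
def IsBichar (χ : (I → ℤ) → (I → ℤ) → 𝕜) : Prop :=
  (∀ a b c : I → ℤ, χ (a + b) c = χ a c * χ b c) ∧
  (∀ c a b : I → ℤ, χ c (a + b) = χ c a * χ c b) ∧
  (∀ a b : I → ℤ, χ a b ≠ 0)

/-- The generators `K_i, K_i⁻¹, L_i, L_i⁻¹, E_i, F_i` of `𝒰(χ)`. -/
inductive UGen (I : Type*) where
  | K (i : I)
  | Kinv (i : I)
  | L (i : I)
  | Linv (i : I)
  | E (i : I)
  | F (i : I)

/-- The toral generators are `K_i, K_i⁻¹, L_i, L_i⁻¹`. -/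
def UGen.IsToral {I : Type*} : UGen I → Prop
  | .K _ => True
  | .Kinv _ => True
  | .L _ => True
  | .Linv _ => True
  | _ => False

variable (𝕜) in
/-- The defining relations of the Drinfel'd double `𝒰(χ)`:
all `K_i^{±1}, L_j^{±1}` commute pairwise; `K_iK_i⁻¹ = 1 = L_iL_i⁻¹`;
`K_iE_j = q_{ij}E_jK_i`, `L_iE_j = q_{ji}⁻¹E_jL_i`, `K_iF_j = q_{ij}⁻¹F_jK_i`,
`L_iF_j = q_{ji}F_jL_i`; `E_iF_j − F_jE_i = δ_{ij}(K_i − L_i)`. -/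
inductive URel (χ : (I → ℤ) → (I → ℤ) → 𝕜) :
    FreeAlgebra 𝕜 (UGen I) → FreeAlgebra 𝕜 (UGen I) → Prop
  | comm (x y : UGen I) (hx : x.IsToral) (hy : y.IsToral) :
      URel χ (FreeAlgebra.ι 𝕜 x * FreeAlgebra.ι 𝕜 y)
        (FreeAlgebra.ι 𝕜 y * FreeAlgebra.ι 𝕜 x)
  | KKinv (i : I) :
      URel χ (FreeAlgebra.ι 𝕜 (.K i) * FreeAlgebra.ι 𝕜 (.Kinv i)) 1
  | LLinv (i : I) :
      URel χ (FreeAlgebra.ι 𝕜 (.L i) * FreeAlgebra.ι 𝕜 (.Linv i)) 1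
  | KE (i j : I) :
      URel χ (FreeAlgebra.ι 𝕜 (.K i) * FreeAlgebra.ι 𝕜 (.E j))
        (χ (eps i) (eps j) • (FreeAlgebra.ι 𝕜 (.E j) * FreeAlgebra.ι 𝕜 (.K i)))
  | LE (i j : I) :
      URel χ (FreeAlgebra.ι 𝕜 (.L i) * FreeAlgebra.ι 𝕜 (.E j))
        ((χ (eps j) (eps i))⁻¹ • (FreeAlgebra.ι 𝕜 (.E j) * FreeAlgebra.ι 𝕜 (.L i)))
  | KF (i j : I) :
      URel χ (FreeAlgebra.ι 𝕜 (.K i) * FreeAlgebra.ι 𝕜 (.F j))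
        ((χ (eps i) (eps j))⁻¹ • (FreeAlgebra.ι 𝕜 (.F j) * FreeAlgebra.ι 𝕜 (.K i)))
  | LF (i j : I) :
      URel χ (FreeAlgebra.ι 𝕜 (.L i) * FreeAlgebra.ι 𝕜 (.F j))
        (χ (eps j) (eps i) • (FreeAlgebra.ι 𝕜 (.F j) * FreeAlgebra.ι 𝕜 (.L i)))
  | EF (i j : I) :
      URel χ (FreeAlgebra.ι 𝕜 (.E i) * FreeAlgebra.ι 𝕜 (.F j) -
          FreeAlgebra.ι 𝕜 (.F j) * FreeAlgebra.ι 𝕜 (.E i))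
        (if i = j then FreeAlgebra.ι 𝕜 (.K i) - FreeAlgebra.ι 𝕜 (.L i) else 0)

/-- The Drinfel'd double `𝒰(χ)`, presented by generators and relations. -/
abbrev UAlg (χ : (I → ℤ) → (I → ℤ) → 𝕜) : Type _ := RingQuot (URel 𝕜 χ)

variable (χ : (I → ℤ) → (I → ℤ) → 𝕜)

/-- The canonical projection from the free algebra onto `𝒰(χ)`. -/
noncomputable def mkU : FreeAlgebra 𝕜 (UGen I) →ₐ[𝕜] UAlg χ :=
  RingQuot.mkAlgHom 𝕜 (URel 𝕜 χ)

/-- The generator `K_i` of `𝒰(χ)`. -/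
noncomputable def uK (i : I) : UAlg χ := mkU χ (FreeAlgebra.ι 𝕜 (.K i))
/-- The generator `K_i⁻¹` of `𝒰(χ)`. -/
noncomputable def uKinv (i : I) : UAlg χ := mkU χ (FreeAlgebra.ι 𝕜 (.Kinv i))
/-- The generator `L_i` of `𝒰(χ)`. -/
noncomputable def uL (i : I) : UAlg χ := mkU χ (FreeAlgebra.ι 𝕜 (.L i))
/-- The generator `L_i⁻¹` of `𝒰(χ)`. -/
noncomputable def uLinv (i : I) : UAlg χ := mkU χ (FreeAlgebra.ι 𝕜 (.Linv i))
/-- The generator `E_i` of `𝒰(χ)`. -/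
noncomputable def uE (i : I) : UAlg χ := mkU χ (FreeAlgebra.ι 𝕜 (.E i))
/-- The generator `F_i` of `𝒰(χ)`. -/
noncomputable def uF (i : I) : UAlg χ := mkU χ (FreeAlgebra.ι 𝕜 (.F i))

/-- The general recursion `Y_0 = Y`, `Y_{m+1} = X Y_m − α β^m Y_m X`; with
`X = E_p`, `Y = E_i`, `α = q_{pi}`, `β = q_{pp}` this gives `E^+_{i,m}`, and
with `X = F_p`, `Y = F_i`, `α = q_{ip}`, `β = q_{pp}` it gives `F^+_{i,m}`. -/
def recE {A : Type*} [Ring A] [Algebra 𝕜 A] (α β : 𝕜) (X Y : A) : ℕ → A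
  | 0 => Y
  | m + 1 => X * recE α β X Y m - (α * β ^ m) • (recE α β X Y m * X)

/-!
Induction on `n`. For `n = 0`, `E_p` commutes with `F_i`, so `[E^+_{i,m+1}, F_i]` is the twisted
commutator of `E_p` with `[E^+_{i,m}, F_i]`; moving `E_p` across `K_i, L_i` multiplies the
coefficient by `q_{ip}⁻¹ - q_{pi} q_{pp}^m` and kills the `L_i` part. For the step `n → n + 1`,
expanding `F^+_{i,n+1} = F_p F^+_{i,n} - q_{ip} q_{pp}^n F^+_{i,n} F_p` splits the commutator into
a twisted commutator of `F_p` with `[E^+_{i,m}, F^+_{i,n}]`, evaluated by the `q`-analogue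
`[E_p^{k+1}, F_p] = [k+1]_{q_{pp}} (q_{pp}^{-k} K_p - L_p) E_p^k` of the `sl₂` relation, and a term
built from `[E^+_{i,m}, F_p]`, a multiple of `E^+_{i,m-1} L_p`, which reduces to
`[E^+_{i,m-1}, F^+_{i,n}] L_p` because `L_p` `q`-commutes with `F^+_{i,n}`. The two
`K_p^n K_i L_p` contributions cancel and what is left is the recursion of the coefficient.
-/

open Finset

section Coefficient

theorem qNat_succ (q : 𝕜) (n : ℕ) : qNat q (n + 1) = qNat q n + q ^ n :=
  sum_range_succ _ _

theorem qNat_succ' (q : 𝕜) (n : ℕ) : qNat q (n + 1) = 1 + q * qNat q n := by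
  simp only [qNat, sum_range_succ', mul_sum, pow_succ', pow_zero]
  ring

/-- The scalar in `⁅E^+_{i,m}, F^+_{i,n}⁆`, with `a = q_{pi}`, `b = q_{ip}`, `q = q_{pp}`. -/
def commutatorCoeff (a b q : 𝕜) (m n : ℕ) : 𝕜 :=
  (-1) ^ n * b ^ ((n : ℤ) - (m : ℤ)) * q ^ ((n : ℤ) * ((n : ℤ) - (m : ℤ))) *
    (∏ s ∈ range n, qNat q (m - s)) * ∏ s ∈ range m, (1 - q ^ s * a * b)

variable {a b q : 𝕜}

theorem commutatorCoeff_of_le {m n : ℕ} (h : n ≤ m) :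
    commutatorCoeff a b q m n =
      (-1) ^ n * (b ^ (m - n))⁻¹ * (q ^ (n * (m - n)))⁻¹ *
        (∏ s ∈ range n, qNat q (m - s)) * ∏ s ∈ range m, (1 - q ^ s * a * b) := by
  have hq : (n : ℤ) * ((n : ℤ) - (m : ℤ)) = -((n * (m - n) : ℕ) : ℤ) := by push_cast [h]; ring
  have hb : (n : ℤ) - (m : ℤ) = -((m - n : ℕ) : ℤ) := by push_cast [h]; ring
  rw [commutatorCoeff, hq, hb, zpow_neg, zpow_neg, zpow_natCast, zpow_natCast]

theorem commutatorCoeff_zero_zero : commutatorCoeff a b q 0 0 = 1 := by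
  simp [commutatorCoeff]

theorem commutatorCoeff_succ_zero (hb : b ≠ 0) (m : ℕ) :
    commutatorCoeff a b q (m + 1) 0 = (b⁻¹ - a * q ^ m) * commutatorCoeff a b q m 0 := by
  simp only [commutatorCoeff_of_le (Nat.zero_le _), prod_range_succ, prod_range_zero,
    Nat.sub_zero, zero_mul, pow_zero, pow_succ]
  generalize (∏ s ∈ range m, (1 - q ^ s * a * b)) = Q
  field_simp

theorem commutatorCoeff_succ_right (hb : b ≠ 0) (hq : q ≠ 0) (n k : ℕ) :
    commutatorCoeff a b q (n + k + 1) (n + 1) =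
      -(b * q ^ n * (q ^ k)⁻¹ * qNat q (k + 1)) * commutatorCoeff a b q (n + k + 1) n := by
  rw [commutatorCoeff_of_le (by omega), commutatorCoeff_of_le (by omega), prod_range_succ,
    show n + k + 1 - (n + 1) = k by omega, show n + k + 1 - n = k + 1 by omega]
  generalize (∏ s ∈ range n, qNat q (n + k + 1 - s)) = P
  generalize (∏ s ∈ range (n + k + 1), (1 - q ^ s * a * b)) = Q
  field_simp
  ring

theorem commutatorCoeff_mul_qNat_add (hb : b ≠ 0) (hq : q ≠ 0) (n k : ℕ) :
    commutatorCoeff a b q (n + k + 1) n * qNat q (k + 1) +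
      (a - b⁻¹ * (q ^ (n + k))⁻¹) * qNat q (n + k + 1) * q ^ k * commutatorCoeff a b q (n + k) n
      = 0 := by
  have hshift (f : ℕ → 𝕜) (m : ℕ) :
      (∏ s ∈ range n, f (m + 1 - s)) * f (m + 1 - n) = f (m + 1) * ∏ s ∈ range n, f (m - s) := by
    rw [← prod_range_succ (fun s => f (m + 1 - s)), prod_range_succ']
    simp only [Nat.add_sub_add_right, Nat.sub_zero, mul_comm]
  have hP := hshift (qNat q) (n + k)
  rw [show n + k + 1 - n = k + 1 by omega] at hP
  rw [commutatorCoeff_of_le (by omega), commutatorCoeff_of_le (by omega), prod_range_succ,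
    show n + k + 1 - n = k + 1 by omega, show n + k - n = k by omega]
  generalize (∏ s ∈ range n, qNat q (n + k + 1 - s)) = P₁ at hP ⊢
  generalize (∏ s ∈ range n, qNat q (n + k - s)) = P₀ at hP ⊢
  generalize (∏ s ∈ range (n + k), (1 - q ^ s * a * b)) = Q
  field_simp
  linear_combination
    (Q * q ^ n * q ^ (n * k) * q ^ k * b * b ^ k * (-1) ^ n * (1 - q ^ n * q ^ k * b * a)) * hP

end Coefficient

section TwistedCommutation

variable {A : Type*} [Ring A] [Algebra 𝕜 A]

theorem mul_pow_eq_smul {x y : A} {c : 𝕜} (h : x * y = c • (y * x)) (n : ℕ) :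
    x * y ^ n = c ^ n • (y ^ n * x) := by
  induction n with
  | zero => simp
  | succ n ih =>
    rw [pow_succ, ← mul_assoc, ih, smul_mul_assoc, mul_assoc, h, mul_smul_comm, smul_smul,
      ← mul_assoc, pow_succ]

theorem pow_mul_eq_smul {x y : A} {c : 𝕜} (h : x * y = c • (y * x)) (n : ℕ) :
    x ^ n * y = c ^ n • (y * x ^ n) := by
  induction n with
  | zero => simp
  | succ n ih =>
    rw [pow_succ', mul_assoc, ih, mul_smul_comm, ← mul_assoc, h, smul_mul_assoc, smul_smul,
      mul_assoc, ← pow_succ', ← pow_succ]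

theorem mul_eq_inv_smul {x y : A} {c : 𝕜} (hc : c ≠ 0) (h : x * y = c • (y * x)) :
    y * x = c⁻¹ • (x * y) := by
  rw [h, smul_smul, inv_mul_cancel₀ hc, one_smul]

theorem lie_mul_sub_smul_mul (c : 𝕜) (x y z : A) :
    ⁅x * y - c • (y * x), z⁆ =
      (⁅x, z⁆ * y - c • (y * ⁅x, z⁆)) + (x * ⁅y, z⁆ - c • (⁅y, z⁆ * x)) := by
  simp only [Ring.lie_def, mul_sub, sub_mul, smul_sub, mul_smul_comm, smul_mul_assoc, mul_assoc]
  abel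

theorem lie_mul_sub_smul_mul' (c : 𝕜) (x y z : A) :
    ⁅z, x * y - c • (y * x)⁆ =
      (⁅z, x⁆ * y - c • (y * ⁅z, x⁆)) + (x * ⁅z, y⁆ - c • (⁅z, y⁆ * x)) := by
  simp only [Ring.lie_def, mul_sub, sub_mul, smul_sub, mul_smul_comm, smul_mul_assoc, mul_assoc]
  abel

theorem lie_pow_succ {q : 𝕜} {E F K L : A} (hq : q ≠ 0) (hEF : ⁅E, F⁆ = K - L)
    (hEK : E * K = q⁻¹ • (K * E)) (hEL : E * L = q • (L * E)) (k : ℕ) :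
    ⁅E ^ (k + 1), F⁆ = qNat q (k + 1) • (((q ^ k)⁻¹ • K - L) * E ^ k) := by
  induction k with
  | zero => simp [qNat, hEF]
  | succ k ih =>
    have hleibniz : ⁅E ^ (k + 2), F⁆ = E * ⁅E ^ (k + 1), F⁆ + ⁅E, F⁆ * E ^ (k + 1) := by
      simp only [Ring.lie_def, pow_succ' E (k + 1), mul_sub, sub_mul, mul_assoc]
      abel
    rw [hleibniz, ih, hEF]
    simp only [mul_smul_comm, mul_sub, sub_mul, ← mul_assoc, hEK, hEL, smul_mul_assoc, smul_sub]
    simp only [mul_assoc, ← pow_succ', smul_smul]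
    match_scalars
    · rw [qNat_succ q (k + 1)]
      field_simp
      ring
    · rw [qNat_succ' q (k + 1)]
      ring

section Recursion

variable {α β ρ : 𝕜} {X Y F K L : A}

@[simp] theorem recE_zero : recE α β X Y 0 = Y := rfl

theorem recE_succ (m : ℕ) :
    recE α β X Y (m + 1) = X * recE α β X Y m - (α * β ^ m) • (recE α β X Y m * X) := rfl

theorem mul_recE_eq_smul {γ δ : 𝕜} (hKX : K * X = γ • (X * K)) (hKY : K * Y = δ • (Y * K))
    (m : ℕ) : K * recE α β X Y m = (δ * γ ^ m) • (recE α β X Y m * K) := by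
  induction m with
  | zero => simpa using hKY
  | succ m ih =>
    rw [recE_succ, mul_sub, ← mul_assoc, hKX, smul_mul_assoc, mul_assoc, ih, mul_smul_comm,
      mul_smul_comm, ← mul_assoc K, ih, smul_mul_assoc, mul_assoc, hKX]
    simp only [mul_smul_comm, smul_smul, smul_sub, sub_mul, smul_mul_assoc, mul_assoc]
    match_scalars <;> ring

theorem lie_recE_succ (hβ : β ≠ 0) (hXF : ⁅X, F⁆ = K - L) (hYF : ⁅Y, F⁆ = 0)
    (hKX : K * X = β • (X * K)) (hKY : K * Y = α • (Y * K))
    (hLX : L * X = β⁻¹ • (X * L)) (hLY : L * Y = ρ • (Y * L)) (m : ℕ) :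
    ⁅recE α β X Y (m + 1), F⁆ = ((α - ρ * (β ^ m)⁻¹) * qNat β (m + 1)) • (recE α β X Y m * L) := by
  have hKL (m : ℕ) : ⁅X, F⁆ * recE α β X Y m - (α * β ^ m) • (recE α β X Y m * ⁅X, F⁆) =
      (α * β ^ m - ρ * (β ^ m)⁻¹) • (recE α β X Y m * L) := by
    rw [hXF, sub_mul, mul_sub, mul_recE_eq_smul hKX hKY, mul_recE_eq_smul hLX hLY, inv_pow]
    module
  induction m with
  | zero =>
    rw [recE_succ, lie_mul_sub_smul_mul, recE_zero, hYF]
    simpa [qNat] using hKL 0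
  | succ m ih =>
    have hX : X * ⁅recE α β X Y (m + 1), F⁆ - (α * β ^ (m + 1)) • (⁅recE α β X Y (m + 1), F⁆ * X) =
        ((α - ρ * (β ^ m)⁻¹) * qNat β (m + 1)) • (recE α β X Y (m + 1) * L) := by
      rw [ih, recE_succ]
      simp only [mul_smul_comm, smul_mul_assoc, mul_assoc, hLX, sub_mul, smul_sub, smul_smul]
      match_scalars
      · field_simp
      · field_simp
        ring
    rw [recE_succ (m + 1), lie_mul_sub_smul_mul, hKL, hX, ← add_smul]
    congr 1
    have h := qNat_succ' β (m + 1)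
    rw [qNat_succ β (m + 1)] at h ⊢
    field_simp
    linear_combination ρ * β ^ m * h

end Recursion

end TwistedCommutation

section Relations

variable {I : Type*} [DecidableEq I] {χ : (I → ℤ) → (I → ℤ) → 𝕜}

theorem uK_mul_uE (j l : I) : uK χ j * uE χ l = χ (eps j) (eps l) • (uE χ l * uK χ j) := by
  simpa only [uK, uE, mkU, map_mul, map_smul] using
    RingQuot.mkAlgHom_rel 𝕜 (URel.KE (χ := χ) j l)

theorem uL_mul_uE (j l : I) :
    uL χ j * uE χ l = (χ (eps l) (eps j))⁻¹ • (uE χ l * uL χ j) := by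
  simpa only [uL, uE, mkU, map_mul, map_smul] using
    RingQuot.mkAlgHom_rel 𝕜 (URel.LE (χ := χ) j l)

theorem uK_mul_uF (j l : I) :
    uK χ j * uF χ l = (χ (eps j) (eps l))⁻¹ • (uF χ l * uK χ j) := by
  simpa only [uK, uF, mkU, map_mul, map_smul] using
    RingQuot.mkAlgHom_rel 𝕜 (URel.KF (χ := χ) j l)

theorem uL_mul_uF (j l : I) : uL χ j * uF χ l = χ (eps l) (eps j) • (uF χ l * uL χ j) := by
  simpa only [uL, uF, mkU, map_mul, map_smul] using
    RingQuot.mkAlgHom_rel 𝕜 (URel.LF (χ := χ) j l)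

theorem uE_mul_uK {j l : I} (h : χ (eps j) (eps l) ≠ 0) :
    uE χ l * uK χ j = (χ (eps j) (eps l))⁻¹ • (uK χ j * uE χ l) :=
  mul_eq_inv_smul h (uK_mul_uE j l)

theorem uE_mul_uL {j l : I} (h : χ (eps l) (eps j) ≠ 0) :
    uE χ l * uL χ j = χ (eps l) (eps j) • (uL χ j * uE χ l) := by
  simpa using mul_eq_inv_smul (inv_ne_zero h) (uL_mul_uE j l)

theorem uF_mul_uK {j l : I} (h : χ (eps j) (eps l) ≠ 0) :
    uF χ l * uK χ j = χ (eps j) (eps l) • (uK χ j * uF χ l) := by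
  simpa using mul_eq_inv_smul (inv_ne_zero h) (uK_mul_uF j l)

theorem lie_uE_uF (j l : I) : ⁅uE χ j, uF χ l⁆ = if j = l then uK χ j - uL χ j else 0 := by
  have h := RingQuot.mkAlgHom_rel 𝕜 (URel.EF (χ := χ) j l)
  split_ifs at h ⊢ <;>
    simpa only [Ring.lie_def, uE, uF, uK, uL, mkU, map_mul, map_sub, map_zero] using h

theorem commute_mkU_of_isToral {x y : UGen I} (hx : x.IsToral) (hy : y.IsToral) :
    Commute (mkU χ (FreeAlgebra.ι 𝕜 x)) (mkU χ (FreeAlgebra.ι 𝕜 y)) := by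
  simpa only [Commute, SemiconjBy, mkU, map_mul] using
    RingQuot.mkAlgHom_rel 𝕜 (URel.comm (χ := χ) x y hx hy)

theorem commute_uK_uK (j l : I) : Commute (uK χ j) (uK χ l) :=
  commute_mkU_of_isToral trivial trivial

theorem commute_uL_uL (j l : I) : Commute (uL χ j) (uL χ l) :=
  commute_mkU_of_isToral trivial trivial

end Relations

section Commutator

variable {I : Type*} [DecidableEq I] {χ : (I → ℤ) → (I → ℤ) → 𝕜} {p i : I}

local notation "q_pp" => χ (eps p) (eps p)
local notation "q_pi" => χ (eps p) (eps i)
local notation "q_ip" => χ (eps i) (eps p)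
local notation "E⁺" => recE q_pi q_pp (uE χ p) (uE χ i)
local notation "F⁺" => recE q_ip q_pp (uF χ p) (uF χ i)

theorem lie_Eplus_uF_i (hχ : ∀ a b, χ a b ≠ 0) (hip : i ≠ p) (m : ℕ) :
    ⁅E⁺ m, uF χ i⁆ = commutatorCoeff q_pi q_ip q_pp m 0 •
      ((uK χ i - if m = 0 then uL χ i else 0) * uE χ p ^ m) := by
  induction m with
  | zero => simp [lie_uE_uF, commutatorCoeff_zero_zero]
  | succ m ih =>
    have hδ : ((if m = 0 then 1 else 0) * (q_pi - q_pi * q_pp ^ m) : 𝕜) = 0 := by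
      split_ifs with hm <;> simp [hm]
    rw [recE_succ, lie_mul_sub_smul_mul, lie_uE_uF, if_neg hip.symm, ih,
      commutatorCoeff_succ_zero (hχ _ _), if_neg m.succ_ne_zero, ← boole_smul (M₀ := 𝕜)]
    simp only [zero_mul, mul_zero, smul_zero, sub_zero, zero_add, mul_smul_comm, smul_mul_assoc,
      mul_sub, sub_mul, ← mul_assoc, uE_mul_uK (hχ _ _), uE_mul_uL (hχ _ _), smul_sub, smul_smul]
    simp only [mul_assoc, ← pow_succ', ← pow_succ]
    match_scalars
    · ring
    · linear_combination -commutatorCoeff q_pi q_ip q_pp m 0 * hδ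

theorem lie_Eplus_succ_uF_p (hχ : ∀ a b, χ a b ≠ 0) (hip : i ≠ p) (m : ℕ) :
    ⁅E⁺ (m + 1), uF χ p⁆ =
      ((q_pi - q_ip⁻¹ * (q_pp ^ m)⁻¹) * qNat q_pp (m + 1)) • (E⁺ m * uL χ p) :=
  lie_recE_succ (hχ _ _) (by simpa using lie_uE_uF (χ := χ) p p)
    (by rw [lie_uE_uF, if_neg hip]) (uK_mul_uE p p) (uK_mul_uE p i) (uL_mul_uE p p)
    (uL_mul_uE p i) m

theorem lie_uE_p_pow_succ_uF_p (hχ : ∀ a b, χ a b ≠ 0) (k : ℕ) :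
    ⁅uE χ p ^ (k + 1), uF χ p⁆ =
      qNat q_pp (k + 1) • (((q_pp ^ k)⁻¹ • uK χ p - uL χ p) * uE χ p ^ k) :=
  lie_pow_succ (hχ _ _) (by simpa using lie_uE_uF (χ := χ) p p) (uE_mul_uK (hχ _ _))
    (uE_mul_uL (hχ _ _)) k

theorem uF_p_mul_uK_pow_mul_uK (hχ : ∀ a b, χ a b ≠ 0) (n : ℕ) :
    uF χ p * (uK χ p ^ n * uK χ i) = (q_ip * q_pp ^ n) • (uK χ p ^ n * uK χ i * uF χ p) := by
  rw [← mul_assoc, mul_pow_eq_smul (uF_mul_uK (hχ _ _)), smul_mul_assoc, mul_assoc,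
    uF_mul_uK (hχ _ _), mul_smul_comm, smul_smul, ← mul_assoc, mul_comm (q_pp ^ n)]

theorem uL_p_mul_Fplus (n : ℕ) : uL χ p * F⁺ n = (q_ip * q_pp ^ n) • (F⁺ n * uL χ p) :=
  mul_recE_eq_smul (uL_mul_uF p p) (uL_mul_uF p i) n

theorem lie_Eplus_Fplus_succ (hχ : ∀ a b, χ a b ≠ 0) (hip : i ≠ p) {n k : ℕ}
    (h₁ : ⁅E⁺ (n + k + 1), F⁺ n⁆ = commutatorCoeff q_pi q_ip q_pp (n + k + 1) n •
      (uK χ p ^ n * uK χ i * uE χ p ^ (k + 1)))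
    (h₀ : ⁅E⁺ (n + k), F⁺ n⁆ = commutatorCoeff q_pi q_ip q_pp (n + k) n •
      ((uK χ p ^ n * uK χ i - if k = 0 then uL χ p ^ n * uL χ i else 0) * uE χ p ^ k)) :
    ⁅E⁺ (n + k + 1), F⁺ (n + 1)⁆ = commutatorCoeff q_pi q_ip q_pp (n + k + 1) (n + 1) •
      ((uK χ p ^ (n + 1) * uK χ i - if k = 0 then uL χ p ^ (n + 1) * uL χ i else 0) *
        uE χ p ^ k) := by
  have hA : ⁅E⁺ (n + k + 1), uF χ p⁆ * F⁺ n -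
        (q_ip * q_pp ^ n) • (F⁺ n * ⁅E⁺ (n + k + 1), uF χ p⁆) =
      ((q_pi - q_ip⁻¹ * (q_pp ^ (n + k))⁻¹) * qNat q_pp (n + k + 1) * (q_ip * q_pp ^ n)) •
        (⁅E⁺ (n + k), F⁺ n⁆ * uL χ p) := by
    rw [lie_Eplus_succ_uF_p hχ hip, Ring.lie_def]
    simp only [smul_mul_assoc, mul_smul_comm, mul_assoc, uL_p_mul_Fplus, sub_mul, smul_sub,
      smul_smul]
    module
  have hB : uF χ p * ⁅E⁺ (n + k + 1), F⁺ n⁆ -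
        (q_ip * q_pp ^ n) • (⁅E⁺ (n + k + 1), F⁺ n⁆ * uF χ p) =
      -(q_ip * q_pp ^ n * commutatorCoeff q_pi q_ip q_pp (n + k + 1) n) •
        (uK χ p ^ n * uK χ i * ⁅uE χ p ^ (k + 1), uF χ p⁆) := by
    rw [h₁, Ring.lie_def, mul_smul_comm, ← mul_assoc, uF_p_mul_uK_pow_mul_uK hχ]
    simp only [smul_mul_assoc, mul_sub, mul_assoc, smul_sub, smul_smul]
    module
  have hK (x : UAlg χ) :
      uK χ p ^ n * (uK χ i * (uK χ p * x)) = uK χ p ^ (n + 1) * (uK χ i * x) := by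
    rw [(commute_uK_uK i p).left_comm, ← mul_assoc, ← pow_succ]
  have hL (x : UAlg χ) :
      uL χ p ^ n * (uL χ i * (uL χ p * x)) = uL χ p ^ (n + 1) * (uL χ i * x) := by
    rw [(commute_uL_uL i p).left_comm, ← mul_assoc, ← pow_succ]
  rw [recE_succ (X := uF χ p) n, lie_mul_sub_smul_mul', hA, hB, h₀, lie_uE_p_pow_succ_uF_p hχ,
    commutatorCoeff_succ_right (hχ _ _) (hχ _ _), ← boole_smul (M₀ := 𝕜) _ (uL χ p ^ n * uL χ i),
    ← boole_smul (M₀ := 𝕜) _ (uL χ p ^ (n + 1) * uL χ i)]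
  simp only [sub_mul, mul_sub, smul_mul_assoc, mul_smul_comm, smul_sub, smul_smul, mul_assoc,
    pow_mul_eq_smul (uE_mul_uL (hχ _ _)), hK, hL]
  -- `hcoeff` is what makes the two `K_p^n K_i L_p E_p^k` terms cancel
  have hcoeff := commutatorCoeff_mul_qNat_add (a := q_pi) (hχ (eps i) (eps p))
    (hχ (eps p) (eps p)) n k
  have hδ : (if k = 0 then 1 else 0 : 𝕜) * (q_pp ^ k)⁻¹ = if k = 0 then 1 else 0 := by
    split_ifs with hk <;> simp [hk]
  match_scalars
  · linear_combination (q_ip * q_pp ^ n) * hcoeff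
  · linear_combination -(q_ip * q_pp ^ n * (if k = 0 then 1 else 0)) * hcoeff -
      q_ip * q_pp ^ n * qNat q_pp (k + 1) * commutatorCoeff q_pi q_ip q_pp (n + k + 1) n * hδ
  · ring

theorem lie_Eplus_Fplus (hχ : ∀ a b, χ a b ≠ 0) (hip : i ≠ p) (n : ℕ) :
    ∀ m, n ≤ m → ⁅E⁺ m, F⁺ n⁆ = commutatorCoeff q_pi q_ip q_pp m n •
      ((uK χ p ^ n * uK χ i - if m = n then uL χ p ^ n * uL χ i else 0) * uE χ p ^ (m - n)) := by
  induction n with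
  | zero => simpa using lie_Eplus_uF_i hχ hip
  | succ n ih =>
    intro m hm
    obtain ⟨k, rfl⟩ : ∃ k, m = n + k + 1 := ⟨m - (n + 1), by omega⟩
    have h₁ := ih (n + k + 1) (by omega)
    have h₀ := ih (n + k) (by omega)
    rw [if_neg (by omega), sub_zero, show n + k + 1 - n = k + 1 by omega] at h₁
    simp only [add_tsub_cancel_left, add_eq_left] at h₀
    simpa only [add_left_inj, add_eq_left, show n + k + 1 - (n + 1) = k by omega] using
      lie_Eplus_Fplus_succ hχ hip h₁ h₀

end Commutator

/-- Lemma (le:E+F+1): the commutator `[E^+_{i,m}, F^+_{i,n}]` in `𝒰(χ)`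
for `m ≥ n`. -/
theorem commutator_Eplus_Fplus (hχ : IsBichar χ) (p i : I) (hip : i ≠ p)
    (m n : ℕ) (hmn : n ≤ m) :
    recE (χ (eps p) (eps i)) (χ (eps p) (eps p)) (uE χ p) (uE χ i) m *
        recE (χ (eps i) (eps p)) (χ (eps p) (eps p)) (uF χ p) (uF χ i) n -
      recE (χ (eps i) (eps p)) (χ (eps p) (eps p)) (uF χ p) (uF χ i) n *
        recE (χ (eps p) (eps i)) (χ (eps p) (eps p)) (uE χ p) (uE χ i) m =
    ((-1 : 𝕜) ^ n * χ (eps i) (eps p) ^ ((n : ℤ) - (m : ℤ)) *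
        χ (eps p) (eps p) ^ ((n : ℤ) * ((n : ℤ) - (m : ℤ))) *
        (∏ s ∈ Finset.range n, qNat (χ (eps p) (eps p)) (m - s)) *
        ∏ s ∈ Finset.range m,
          (1 - χ (eps p) (eps p) ^ s * χ (eps p) (eps i) * χ (eps i) (eps p))) •
      ((uK χ p ^ n * uK χ i - if m = n then uL χ p ^ n * uL χ i else 0) *
        uE χ p ^ (m - n)) :=
  lie_Eplus_Fplus hχ.2.2 hip n m hmn
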